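/- arXiv:0707.4297 — 2 statements merged into one kernel-verified Lean document; each statement's English description precedes it below -/
import Mathlib

section
/- Let H and H' be complex Hilbert spaces, let A : H → H and B : H' → H' be bounded self-adjoint positive invertible operators, and let J : H' → H be a bounded operator such that ⟪B x, y⟫ = ⟪A (J x), J y⟫ for all x, y ∈ H'. Then A⁻¹ − J ∘ B⁻¹ ∘ J* is a positive operator on H, i.e. J B⁻¹ J* ≤ A⁻¹. (Bounded-operator form of Proposition 2.1(i).) -/
/-!
The form identity says `B = J† A J`. Put `T = A⁻¹ - J B⁻¹ J†`; it is self-adjoint, and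
`T A = 1 - J B⁻¹ J† A` is the complement of the idempotent `J B⁻¹ J† A`, which gives
`T A T = T`. Hence `T = T† A T`, a conjugate of the positive operator `A`.
-/

open scoped InnerProductSpace

open ContinuousLinearMap

theorem IsSelfAdjoint.of_mul_eq_one {R : Type*} [Monoid R] [StarMul R] {a b : R}
    (ha : IsSelfAdjoint a) (h : a * b = 1) : IsSelfAdjoint b := by
  calc star b = star b * (a * b) := by rw [h, mul_one]
    _ = star (star a * b) * b := by rw [star_mul, star_star, mul_assoc]
    _ = b := by rw [ha.star_eq, h, star_one, one_mul]

theorem IsSelfAdjoint.mul_eq_one_symm {R : Type*} [Monoid R] [StarMul R] {a b : R}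
    (ha : IsSelfAdjoint a) (hb : IsSelfAdjoint b) (h : a * b = 1) : b * a = 1 := by
  simpa [ha.star_eq, hb.star_eq] using congrArg star h

theorem ContinuousLinearMap.eq_adjoint_comp_comp_of_inner_eq {𝕜 E F : Type*} [RCLike 𝕜]
    [NormedAddCommGroup E] [InnerProductSpace 𝕜 E] [CompleteSpace E]
    [NormedAddCommGroup F] [InnerProductSpace 𝕜 F] [CompleteSpace F]
    {A : E →L[𝕜] E} {B : F →L[𝕜] F} {J : F →L[𝕜] E}
    (h : ∀ x y, ⟪B x, y⟫_𝕜 = ⟪A (J x), J y⟫_𝕜) : B = adjoint J ∘L A ∘L J :=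
  ext fun x => ext_inner_right 𝕜 fun y => by simp [adjoint_inner_left, h]

theorem stmt0_general
    {H H' : Type*} [NormedAddCommGroup H] [InnerProductSpace ℂ H] [CompleteSpace H]
    [NormedAddCommGroup H'] [InnerProductSpace ℂ H'] [CompleteSpace H']
    (A A' : H →L[ℂ] H) (B B' : H' →L[ℂ] H') (J : H' →L[ℂ] H)
    (hA : A.IsPositive)
    (hAinv : A.comp A' = ContinuousLinearMap.id ℂ H)
    (hBinv : B.comp B' = ContinuousLinearMap.id ℂ H')
    (hform : ∀ x y : H', ⟪B x, y⟫_ℂ = ⟪A (J x), J y⟫_ℂ) :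
    (A' - J.comp (B'.comp (ContinuousLinearMap.adjoint J))).IsPositive := by
  set T := A' - J ∘L B' ∘L adjoint J
  have hB : B = adjoint J ∘L A ∘L J := eq_adjoint_comp_comp_of_inner_eq hform
  have hA' : IsSelfAdjoint A' := hA.isSelfAdjoint.of_mul_eq_one hAinv
  have hB' : IsSelfAdjoint B' := (hB ▸ hA.isSelfAdjoint.adjoint_conj J).of_mul_eq_one hBinv
  have hT : IsSelfAdjoint T := hA'.sub (hB'.conj_adjoint J)
  have hTAT : T ∘L A ∘L T = T := by
    have hAA' (x : H) : A (A' x) = x := congr($hAinv x)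
    have hA'A (x : H) : A' (A x) = x := congr($(hA.isSelfAdjoint.mul_eq_one_symm hA' hAinv) x)
    have hBB' (y : H') : B (B' y) = y := congr($hBinv y)
    have hJAJ (y : H') : adjoint J (A (J y)) = B y := congr($hB.symm y)
    ext x
    simp [T, hAA', hA'A, hBB', hJAJ]
  simpa only [hT.adjoint_eq, hTAT] using hA.adjoint_conj T

/-- Bounded-operator form of Proposition 2.1(i): if the quadratic form of `B`
agrees with that of `A` through `J`, then `J B⁻¹ J* ≤ A⁻¹`. -/
theorem stmt0
    {H H' : Type*} [NormedAddCommGroup H] [InnerProductSpace ℂ H] [CompleteSpace H]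
    [NormedAddCommGroup H'] [InnerProductSpace ℂ H'] [CompleteSpace H']
    (A A' : H →L[ℂ] H) (B B' : H' →L[ℂ] H') (J : H' →L[ℂ] H)
    (hA : A.IsPositive) (hB : B.IsPositive)
    (hAinv : A.comp A' = ContinuousLinearMap.id ℂ H)
    (hAinv' : A'.comp A = ContinuousLinearMap.id ℂ H)
    (hBinv : B.comp B' = ContinuousLinearMap.id ℂ H')
    (hBinv' : B'.comp B = ContinuousLinearMap.id ℂ H')
    (hform : ∀ x y : H', ⟪B x, y⟫_ℂ = ⟪A (J x), J y⟫_ℂ) :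
    (A' - J.comp (B'.comp (ContinuousLinearMap.adjoint J))).IsPositive :=
  stmt0_general A A' B B' J hA hAinv hBinv hform
end

section
/- Let s > 0 and β > 0. Then there exists a finite-dimensional subspace F of L²(0, s) such that every continuously differentiable function u : [0, s] → ℂ satisfying ∫₀ˢ u(t)·conj(g(t)) dt = 0 for all g ∈ F obeys ∫₀ˢ |u(t)|² dt ≤ β² · ∫₀ˢ |u'(t)|² dt. (Inequality (4.7) of the paper: a Poincaré-type inequality on a subspace of finite codimension, deduced from the compactness of the embedding H¹(0,s) ⊂ L²(0,s).) -/
/-!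
Split `(0, s)` into `N` intervals of length `h = s / N ≤ β` and let `F` be spanned by their
indicator functions. Orthogonality to `F` says that `u` has mean zero on each piece. On a piece of
length `h`, a mean-zero `u` satisfies `|u x| ≤ ∫ |u'|` (by the fundamental theorem of calculus, since
`u x` is the average of `u x - u y`), and Cauchy–Schwarz gives `(∫ |u'|)² ≤ h ∫ |u'|²`; hence
`∫ |u|² ≤ h² ∫ |u'|²` on every piece, and summing over the pieces gives the claim.
-/

open MeasureTheory Set

section

variable {α E : Type*} [MeasurableSpace α] {μ : Measure α} {S : Set α}
  [NormedAddCommGroup E] [NormedSpace ℝ E] [CompleteSpace E]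

lemma sq_setIntegral_le_measureReal_mul_setIntegral_sq {f : α → ℝ} (hμS : μ S ≠ ⊤)
    (hf : IntegrableOn f S μ) (hf2 : IntegrableOn (fun x ↦ f x ^ 2) S μ) :
    (∫ x in S, f x ∂μ) ^ 2 ≤ μ.real S * ∫ x in S, f x ^ 2 ∂μ := by
  rcases eq_or_ne (μ S) 0 with hS0 | hS0
  · simp [Measure.restrict_eq_zero.mpr hS0]
  have hL : 0 < μ.real S := ENNReal.toReal_pos hS0 hμS
  have hJensen := (Even.convexOn_pow (𝕜 := ℝ) even_two).map_set_average_le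
    (continuous_pow 2).continuousOn isClosed_univ hS0 hμS
    (Filter.Eventually.of_forall fun _ ↦ mem_univ _) hf hf2
  rw [setAverage_eq, setAverage_eq, smul_eq_mul, smul_eq_mul, mul_pow,
    inv_pow, inv_mul_le_iff₀ (by positivity)] at hJensen
  calc (∫ x in S, f x ∂μ) ^ 2 ≤ μ.real S ^ 2 * ((μ.real S)⁻¹ * ∫ x in S, f x ^ 2 ∂μ) := hJensen
    _ = μ.real S * ∫ x in S, f x ^ 2 ∂μ := by field_simp

lemma norm_le_of_setIntegral_eq_zero {f : α → E} (hμS0 : μ S ≠ 0) (hμS : μ S ≠ ⊤)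
    (hf : IntegrableOn f S μ) (hmean : ∫ y in S, f y ∂μ = 0) {C : ℝ}
    (hC : ∀ x ∈ S, ∀ y ∈ S, ‖f x - f y‖ ≤ C) {x : α} (hx : x ∈ S) : ‖f x‖ ≤ C := by
  have hL : 0 < μ.real S := ENNReal.toReal_pos hμS0 hμS
  have hconst : μ.real S • f x = ∫ y in S, (f x - f y) ∂μ := by
    rw [integral_sub (integrableOn_const (C := f x) hμS) hf, hmean, sub_zero, setIntegral_const]
  have := norm_setIntegral_le_of_norm_le_const hμS.lt_top (hC x hx)
  rw [← hconst, norm_smul, Real.norm_of_nonneg hL.le, mul_comm] at this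
  exact le_of_mul_le_mul_right this hL

variable {u u' : ℝ → E} {a b : ℝ}

lemma norm_sub_le_setIntegral_norm_deriv (hu : ContinuousOn u (Icc a b))
    (hderiv : ∀ t ∈ Ioo a b, HasDerivAt u (u' t) t) (hu' : IntegrableOn u' (Icc a b))
    {x y : ℝ} (hx : x ∈ Icc a b) (hy : y ∈ Icc a b) :
    ‖u y - u x‖ ≤ ∫ t in Ioo a b, ‖u' t‖ := by
  wlog hxy : x ≤ y generalizing x y
  · rw [norm_sub_rev]; exact this hy hx (le_of_not_ge hxy)
  have hsub : Icc x y ⊆ Icc a b := Icc_subset_Icc hx.1 hy.2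
  rw [← intervalIntegral.integral_eq_sub_of_hasDerivAt_of_le hxy (hu.mono hsub)
    (fun t ht ↦ hderiv t (Ioo_subset_Ioo hx.1 hy.2 ht))
    ((hu'.mono_set (by rwa [uIcc_of_le hxy])).intervalIntegrable)]
  calc ‖∫ t in x..y, u' t‖ ≤ ∫ t in x..y, ‖u' t‖ :=
        intervalIntegral.norm_integral_le_integral_norm hxy
    _ = ∫ t in Ioc x y, ‖u' t‖ := intervalIntegral.integral_of_le hxy
    _ ≤ ∫ t in Icc a b, ‖u' t‖ := setIntegral_mono_set hu'.norm
          (Filter.Eventually.of_forall fun _ ↦ norm_nonneg _)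
          (Ioc_subset_Icc_self.trans hsub).eventuallyLE
    _ = ∫ t in Ioo a b, ‖u' t‖ := integral_Icc_eq_integral_Ioo

theorem setIntegral_Ioo_norm_sq_le_of_setIntegral_eq_zero (hab : a < b)
    (hu : ContinuousOn u (Icc a b)) (hderiv : ∀ t ∈ Ioo a b, HasDerivAt u (u' t) t)
    (hu' : ContinuousOn u' (Icc a b)) (hmean : ∫ t in Ioo a b, u t = 0) :
    ∫ t in Ioo a b, ‖u t‖ ^ 2 ≤ (b - a) ^ 2 * ∫ t in Ioo a b, ‖u' t‖ ^ 2 := by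
  have hvol : volume.real (Ioo a b) = b - a := by
    rw [Real.volume_real_Ioo, max_eq_left (sub_nonneg.2 hab.le)]
  set A := ∫ t in Ioo a b, ‖u' t‖
  have hpointwise : ∀ x ∈ Ioo a b, ‖u x‖ ≤ A := fun x hx ↦
    norm_le_of_setIntegral_eq_zero (by simp [hab]) measure_Ioo_lt_top.ne
      (hu.integrableOn_Icc.mono_set Ioo_subset_Icc_self) hmean
      (fun y hy z hz ↦ norm_sub_le_setIntegral_norm_deriv hu hderiv hu'.integrableOn_Icc
        (Ioo_subset_Icc_self hz) (Ioo_subset_Icc_self hy)) hx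
  have hcauchySchwarz : A ^ 2 ≤ (b - a) * ∫ t in Ioo a b, ‖u' t‖ ^ 2 := hvol ▸
    sq_setIntegral_le_measureReal_mul_setIntegral_sq measure_Ioo_lt_top.ne
      (hu'.norm.integrableOn_Icc.mono_set Ioo_subset_Icc_self)
      ((hu'.norm.pow 2).integrableOn_Icc.mono_set Ioo_subset_Icc_self)
  calc ∫ t in Ioo a b, ‖u t‖ ^ 2 ≤ ‖∫ t in Ioo a b, ‖u t‖ ^ 2‖ := Real.le_norm_self _
    _ ≤ A ^ 2 * (b - a) := hvol ▸ norm_setIntegral_le_of_norm_le_const measure_Ioo_lt_top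
          fun x hx ↦ by simpa using pow_le_pow_left₀ (norm_nonneg _) (hpointwise x hx) 2
    _ ≤ (b - a) ^ 2 * ∫ t in Ioo a b, ‖u' t‖ ^ 2 := by nlinarith

theorem setIntegral_Ioo_norm_sq_le_of_uniform_partition {h : ℝ} (hh : 0 < h) {N : ℕ}
    (hu : ContinuousOn u (Icc 0 (N * h))) (hderiv : ∀ t ∈ Ioo 0 (N * h), HasDerivAt u (u' t) t)
    (hu' : ContinuousOn u' (Icc 0 (N * h)))
    (hmean : ∀ k < N, ∫ t in Ioo (k * h) ((k + 1) * h), u t = 0) :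
    ∫ t in Ioo 0 (N * h), ‖u t‖ ^ 2 ≤ h ^ 2 * ∫ t in Ioo 0 (N * h), ‖u' t‖ ^ 2 := by
  set x : ℕ → ℝ := fun k ↦ k * h
  have hx : ∀ k : ℕ, x (k + 1) = (k + 1) * h := fun k ↦ by simp [x]
  have hstep : ∀ k, x (k + 1) - x k = h := fun k ↦ by rw [hx]; simp only [x]; ring
  have hlt : ∀ k, x k < x (k + 1) := fun k ↦ by linarith [hstep k]
  have hnonneg : ∀ k, 0 ≤ x k := fun k ↦ by positivity
  have hle_end : ∀ k < N, x (k + 1) ≤ N * h := fun k hk ↦ by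
    rw [hx]; gcongr; exact_mod_cast hk
  have hpiece : ∀ k < N, Icc (x k) (x (k + 1)) ⊆ Icc 0 (N * h) := fun k hk ↦
    Icc_subset_Icc (hnonneg k) (hle_end k hk)
  have hIoo : ∀ {c d : ℝ} (f : ℝ → ℝ), c ≤ d → ∫ t in c..d, f t = ∫ t in Ioo c d, f t :=
    fun f hcd ↦ by rw [intervalIntegral.integral_of_le hcd, integral_Ioc_eq_integral_Ioo]
  have hsum : ∀ f : ℝ → ℝ, ContinuousOn f (Icc 0 (N * h)) →
      ∑ k ∈ Finset.range N, ∫ t in Ioo (x k) (x (k + 1)), f t = ∫ t in Ioo 0 (N * h), f t :=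
    fun f hf ↦ calc
      _ = ∑ k ∈ Finset.range N, ∫ t in x k..x (k + 1), f t :=
        Finset.sum_congr rfl fun k _ ↦ (hIoo f (hlt k).le).symm
      _ = ∫ t in x 0..x N, f t := intervalIntegral.sum_integral_adjacent_intervals
        fun k hk ↦ (hf.mono (hpiece k hk)).intervalIntegrable_of_Icc (hlt k).le
      _ = ∫ t in Ioo 0 (N * h), f t := by simp [x, hIoo f (by positivity : (0 : ℝ) ≤ N * h)]
  rw [← hsum (fun t ↦ ‖u t‖ ^ 2) (hu.norm.pow 2), ← hsum (fun t ↦ ‖u' t‖ ^ 2) (hu'.norm.pow 2),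
    Finset.mul_sum]
  refine Finset.sum_le_sum fun k hk ↦ ?_
  have hk := Finset.mem_range.mp hk
  have := setIntegral_Ioo_norm_sq_le_of_setIntegral_eq_zero (hlt k) (hu.mono (hpiece k hk))
    (fun t ht ↦ hderiv t (Ioo_subset_Ioo (hnonneg k) (hle_end k hk) ht)) (hu'.mono (hpiece k hk))
    (hx k ▸ hmean k hk)
  rwa [hstep] at this

end

lemma integral_mul_conj_indicatorConstLp_one {α 𝕜 : Type*} [MeasurableSpace α] [RCLike 𝕜]
    {μ : Measure α} {p : ENNReal} {T : Set α} (hT : MeasurableSet T) (hμT : μ T ≠ ⊤)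
    (u : α → 𝕜) :
    ∫ t, u t * starRingEnd 𝕜 (indicatorConstLp p hT hμT (1 : 𝕜) t) ∂μ = ∫ t in T, u t ∂μ := by
  rw [← integral_indicator hT]
  refine integral_congr_ae ?_
  filter_upwards [indicatorConstLp_coeFn (p := p) (hs := hT) (hμs := hμT) (c := (1 : 𝕜))]
    with t ht
  by_cases htT : t ∈ T <;> simp [ht, htT]

/-- Inequality (4.7): a Poincaré-type inequality on a subspace of finite codimension of
`L²(0,s)`. For every `β > 0` there is a finite-dimensional subspace `F` of `L²(0,s)`
such that every `C¹` function `u` on `[0,s]` orthogonal to `F` satisfies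
`∫₀ˢ |u|² ≤ β² ∫₀ˢ |u'|²`. -/
theorem stmt8 (s : ℝ) (hs : 0 < s) (β : ℝ) (hβ : 0 < β) :
    ∃ F : Submodule ℂ (Lp ℂ 2 (volume.restrict (Set.Ioo (0 : ℝ) s))),
      FiniteDimensional ℂ F ∧
      ∀ u : ℝ → ℂ, ContDiffOn ℝ 1 u (Set.Icc 0 s) →
        (∀ g : Lp ℂ 2 (volume.restrict (Set.Ioo (0 : ℝ) s)), g ∈ F →
          ∫ t in Set.Ioo (0 : ℝ) s, u t * (starRingEnd ℂ) (g t) = 0) →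
        ∫ t in Set.Ioo (0 : ℝ) s, ‖u t‖ ^ 2
          ≤ β ^ 2 * ∫ t in Set.Ioo (0 : ℝ) s, ‖derivWithin u (Set.Icc 0 s) t‖ ^ 2 := by
  obtain ⟨N, hN⟩ := exists_nat_gt (s / β)
  have hNpos : (0 : ℝ) < N := (div_pos hs hβ).trans hN
  set h := s / N
  have hh : 0 < h := div_pos hs hNpos
  have hhβ : h ≤ β := by
    rw [div_lt_iff₀ hβ] at hN
    rw [div_le_iff₀ hNpos]
    linarith
  have hNh : N * h = s := mul_div_cancel₀ s hNpos.ne'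
  have hpiece : ∀ k < N, Ioo (k * h) ((k + 1) * h) ⊆ Ioo 0 s := fun k hk ↦
    Ioo_subset_Ioo (by positivity) (by rw [← hNh]; gcongr; exact_mod_cast hk)
  let g : Fin N → Lp ℂ 2 (volume.restrict (Ioo 0 s)) := fun k ↦
    indicatorConstLp 2 (measurableSet_Ioo (a := k * h) (b := (k + 1) * h)) (measure_ne_top _ _) 1
  refine ⟨Submodule.span ℂ (range g), FiniteDimensional.span_of_finite ℂ (finite_range g),
    fun u hu horth ↦ ?_⟩
  have hmean : ∀ k < N, ∫ t in Ioo (k * h) ((k + 1) * h), u t = 0 := fun k hk ↦ by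
    have := horth (g ⟨k, hk⟩) (Submodule.subset_span (mem_range_self _))
    rwa [integral_mul_conj_indicatorConstLp_one, Measure.restrict_restrict measurableSet_Ioo,
      inter_eq_left.2 (hpiece k hk)] at this
  have hderiv : ∀ t ∈ Ioo 0 s, HasDerivAt u (derivWithin u (Icc 0 s) t) t := fun t ht ↦
    (hu.differentiableOn one_ne_zero t (Ioo_subset_Icc_self ht)).hasDerivWithinAt.hasDerivAt
      (Icc_mem_nhds ht.1 ht.2)
  have hpoincare := setIntegral_Ioo_norm_sq_le_of_uniform_partition hh (hNh ▸ hu.continuousOn)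
    (hNh ▸ hderiv) (hNh ▸ hu.continuousOn_derivWithin (uniqueDiffOn_Icc hs) le_rfl) hmean
  rw [hNh] at hpoincare
  refine hpoincare.trans (mul_le_mul_of_nonneg_right (pow_le_pow_left₀ hh.le hhβ 2) ?_)
  exact setIntegral_nonneg measurableSet_Ioo fun t _ ↦ sq_nonneg _
end
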